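/- Let Φ : H₂(ℂ) → H₂(ℂ) be a J.T.P. homomorphism with Φ(0) = 0, Φ(I) = I, and Φ(diag(1,-1)) ∈ {I, -I}. Then for every invertible A ∈ H₂(ℂ) which is positive definite or has one positive and one negative eigenvalue, Φ(A) = Φ(diag(det A, 1)); and for every negative definite A, Φ(A) = Φ(-I) · Φ(diag(det A, 1)). -/

import Mathlib

/-!
Call a trace-zero Hermitian involution a reflection, and write `Φ σ_z = ε • 1` with `ε = ±1`.
Any reflection `V` is `T σ_z T` for a reflection `T` (a normalisation of `V + σ_z`), so
`Φ V = ε • Φ T ^ 2 = ε • Φ (T ^ 2) = ε • 1`. Hence `Φ (S V S) = ε • Φ (S ^ 2)` for Hermitian `S`,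
and `Φ (T B T) = Φ B`. Conjugation by a reflection diagonalises every Hermitian matrix, which
reduces the claim to real diagonal matrices `diag(l, m)`:
* for `l, m > 0`, `diag(√l, √m) σ_x diag(√l, √m) = √(lm) σ_x`, so `Φ (diag(l, m))` only depends
  on `lm`;
* for `lm < 0`, `diag(l, m) = S (±σ_z) S` with `S ^ 2 = diag(|l|, |m|)`;
* for `l, m < 0`, `diag(l, m) = S (-1) S`, and `Φ (-1)` commutes with `Φ S`, being an involution
  that fixes `Φ S` under conjugation.
-/

open Matrix
open scoped ComplexOrder

local notation "M₂" => Matrix (Fin 2) (Fin 2) ℂ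

lemma Complex.ofReal_sqrt_mul_self {x : ℝ} (hx : 0 ≤ x) : (√x : ℂ) * √x = x := by
  rw [← Complex.ofReal_mul, Real.mul_self_sqrt hx]

section Anticommuting

variable {R A : Type*} [CommRing R] [Ring A] [Algebra R A] {V W : A} {τ : R}

lemma add_mul_self_of_anticomm (hV : V * V = 1) (hW : W * W = 1)
    (h : V * W + W * V = τ • 1) : (V + W) * (V + W) = (2 + τ) • 1 := by
  have e : (V + W) * (V + W) = V * V + (V * W + W * V) + W * W := by noncomm_ring
  rw [e, hV, hW, h, add_smul, two_smul]
  abel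

lemma add_mul_mul_add_of_anticomm (hV : V * V = 1) (hW : W * W = 1)
    (h : V * W + W * V = τ • 1) : (V + W) * W * (V + W) = (2 + τ) • V := by
  have hVWV : V * W * V = τ • V - W := by
    rw [eq_sub_of_add_eq h, sub_mul, smul_mul_assoc, one_mul, mul_assoc, hV, mul_one]
  have e : (V + W) * W * (V + W) = V * W * V + V * (W * W) + W * W * V + W * (W * W) := by
    noncomm_ring
  rw [e, hVWV, hW, mul_one, one_mul, mul_one, add_smul, two_smul]
  abel

end Anticommuting

lemma diagonal_vec2_mul_diagonal_vec2 {α : Type*} [NonUnitalNonAssocSemiring α] (a b c d : α) :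
    (diagonal ![a, b] : Matrix (Fin 2) (Fin 2) α) * diagonal ![c, d] =
      diagonal ![a * c, b * d] := by
  rw [diagonal_mul_diagonal]
  congr 1
  ext i
  fin_cases i <;> rfl

lemma neg_diagonal_vec2 {α : Type*} [NegZeroClass α] (a b : α) :
    -(diagonal ![a, b] : Matrix (Fin 2) (Fin 2) α) = diagonal ![-a, -b] := by
  rw [diagonal_neg]
  congr 1
  ext i
  fin_cases i <;> rfl

lemma isHermitian_diagonal_ofReal (l m : ℝ) : (diagonal ![(l : ℂ), m]).IsHermitian := by
  rw [isHermitian_diagonal_iff]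
  intro i
  fin_cases i <;> exact Complex.conj_ofReal _

lemma posDef_diagonal_ofReal_iff {l m : ℝ} :
    (diagonal ![(l : ℂ), m]).PosDef ↔ 0 < l ∧ 0 < m := by
  simp [Fin.forall_fin_two]

lemma Matrix.IsHermitian.exists_eq_of_trace_eq_zero {X : M₂} (hX : X.IsHermitian)
    (h0 : X.trace = 0) : ∃ (a : ℝ) (z : ℂ), X = !![(a : ℂ), z; star z, -a] := by
  have h00 : ((X 0 0).re : ℂ) = X 0 0 := hX.coe_re_apply_self 0
  rw [trace_fin_two] at h0
  refine ⟨(X 0 0).re, X 0 1, ?_⟩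
  ext i j
  fin_cases i <;> fin_cases j
  · exact h00.symm
  · rfl
  · exact (hX.apply 1 0).symm
  · show X 1 1 = -((X 0 0).re : ℂ)
    rw [h00]
    linear_combination h0

lemma traceless_hermitian_mul_self (a : ℝ) (z : ℂ) :
    !![(a : ℂ), z; star z, -a] * !![(a : ℂ), z; star z, -a] =
      ((a ^ 2 + Complex.normSq z : ℝ) : ℂ) • 1 := by
  ext i j
  fin_cases i <;> fin_cases j <;>
    simp [mul_apply, Complex.normSq_eq_conj_mul_self, sq] <;> ring

/-- The reflections are the matrices `x σ_x + y σ_y + z σ_z` with `x² + y² + z² = 1`. -/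
structure IsReflection (V : M₂) : Prop where
  isHermitian : V.IsHermitian
  trace_eq_zero : V.trace = 0
  mul_self : V * V = 1

def pauliX : M₂ := !![0, 1; 1, 0]

def pauliZ : M₂ := diagonal ![1, -1]

lemma isReflection_pauliX : IsReflection pauliX where
  isHermitian := by ext i j; fin_cases i <;> fin_cases j <;> simp [pauliX]
  trace_eq_zero := by simp [pauliX, trace_fin_two]
  mul_self := by ext i j; fin_cases i <;> fin_cases j <;> simp [pauliX, mul_apply]

lemma isReflection_pauliZ : IsReflection pauliZ where
  isHermitian := by ext i j; fin_cases i <;> fin_cases j <;> simp [pauliZ, diagonal_vec2]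
  trace_eq_zero := by simp [pauliZ]
  mul_self := by ext i j; fin_cases i <;> fin_cases j <;> simp [pauliZ, diagonal_vec2]

lemma diagonal_mul_pauliX_mul (a b : ℂ) :
    diagonal ![a, b] * pauliX * diagonal ![a, b] = (a * b) • pauliX := by
  ext i j; fin_cases i <;> fin_cases j <;> simp [pauliX, diagonal_vec2, mul_comm]

lemma isReflection_ofReal_inv_smul {H : M₂} (hH : H.IsHermitian) (h0 : H.trace = 0) {r : ℝ}
    (hr : H * H = ((r * r : ℝ) : ℂ) • 1) (hr0 : r ≠ 0) : IsReflection (((r⁻¹ : ℝ) : ℂ) • H) where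
  isHermitian := hH.smul (Complex.conj_ofReal _)
  trace_eq_zero := by rw [trace_smul, h0, smul_zero]
  mul_self := by
    rw [smul_mul_smul, hr, smul_smul, ← Complex.ofReal_mul, ← Complex.ofReal_mul,
      show r⁻¹ * r⁻¹ * (r * r) = 1 by field_simp, Complex.ofReal_one, one_smul]

lemma Matrix.IsHermitian.exists_ofReal_smul_isReflection {X : M₂} (hX : X.IsHermitian)
    (h0 : X.trace = 0) : ∃ (r : ℝ) (W : M₂), IsReflection W ∧ X = (r : ℂ) • W := by
  obtain ⟨a, z, hXaz⟩ := hX.exists_eq_of_trace_eq_zero h0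
  have hXX : X * X = ((a ^ 2 + Complex.normSq z : ℝ) : ℂ) • 1 := by
    rw [hXaz, traceless_hermitian_mul_self]
  rcases (add_nonneg (sq_nonneg a) (Complex.normSq_nonneg z)).eq_or_lt with hc | hc
  · refine ⟨0, pauliZ, isReflection_pauliZ, ?_⟩
    have ha : a = 0 := by nlinarith [Complex.normSq_nonneg z]
    have hz : z = 0 := Complex.normSq_eq_zero.mp (by nlinarith [sq_nonneg a])
    rw [hXaz, ha, hz, Complex.ofReal_zero, zero_smul]
    ext i j; fin_cases i <;> fin_cases j <;> simp
  · set r := √(a ^ 2 + Complex.normSq z)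
    have hr0 : r ≠ 0 := (Real.sqrt_pos.mpr hc).ne'
    refine ⟨r, ((r⁻¹ : ℝ) : ℂ) • X, isReflection_ofReal_inv_smul hX h0
      (by rw [hXX, Real.mul_self_sqrt hc.le]) hr0, ?_⟩
    rw [smul_smul, ← Complex.ofReal_mul, mul_inv_cancel₀ hr0, Complex.ofReal_one, one_smul]

namespace IsReflection

variable {T V : M₂}

lemma neg (hV : IsReflection V) : IsReflection (-V) where
  isHermitian := hV.isHermitian.neg
  trace_eq_zero := by rw [trace_neg, hV.trace_eq_zero, neg_zero]
  mul_self := by rw [neg_mul_neg, hV.mul_self]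

lemma isUnit (hT : IsReflection T) : IsUnit T :=
  ⟨⟨T, T, hT.mul_self, hT.mul_self⟩, rfl⟩

lemma det_conj (hT : IsReflection T) (B : M₂) : (T * B * T).det = B.det := by
  rw [det_mul, det_mul, mul_comm _ B.det, mul_assoc, ← det_mul, hT.mul_self, det_one, mul_one]

lemma det_conj_diagonal (hT : IsReflection T) (l m : ℝ) :
    (T * diagonal ![(l : ℂ), m] * T).det = l * m := by
  rw [hT.det_conj, det_diagonal, Fin.prod_univ_two]
  rfl

lemma posDef_conj_iff (hT : IsReflection T) {B : M₂} : (T * B * T).PosDef ↔ B.PosDef := by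
  have h := Matrix.IsUnit.posDef_star_left_conjugate_iff (x := B) hT.isUnit
  rwa [star_eq_conjTranspose, hT.isHermitian.eq] at h

lemma posDef_conj_diagonal_iff (hT : IsReflection T) {l m : ℝ} :
    (T * diagonal ![(l : ℂ), m] * T).PosDef ↔ 0 < l ∧ 0 < m := by
  rw [hT.posDef_conj_iff, posDef_diagonal_ofReal_iff]

lemma posDef_neg_conj_diagonal_iff (hT : IsReflection T) {l m : ℝ} :
    (-(T * diagonal ![(l : ℂ), m] * T)).PosDef ↔ l < 0 ∧ m < 0 := by
  rw [← neg_mul, ← mul_neg, neg_diagonal_vec2, ← Complex.ofReal_neg, ← Complex.ofReal_neg,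
    hT.posDef_conj_diagonal_iff, neg_pos, neg_pos]

lemma exists_conj_pauliZ (hV : IsReflection V) : ∃ T, IsReflection T ∧ T * pauliZ * T = V := by
  obtain ⟨a, z, hVaz⟩ := hV.isHermitian.exists_eq_of_trace_eq_zero hV.trace_eq_zero
  have hnorm : a ^ 2 + Complex.normSq z = 1 := by
    have h := congr_fun (congr_fun hV.mul_self 0) 0
    rw [hVaz, traceless_hermitian_mul_self, Matrix.smul_apply, one_apply_eq, smul_eq_mul,
      mul_one] at h
    exact_mod_cast h
  -- `T` is `V + σ_z` normalised, unless `V = -σ_z`, where `σ_x` does the job.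
  rcases eq_or_ne a (-1) with rfl | ha
  · have hz : z = 0 := Complex.normSq_eq_zero.mp (by linarith)
    refine ⟨pauliX, isReflection_pauliX, ?_⟩
    rw [hVaz, hz]
    ext i j; fin_cases i <;> fin_cases j <;> simp [pauliX, pauliZ, diagonal_vec2, mul_apply]
  have hanti : V * pauliZ + pauliZ * V = ((2 * a : ℝ) : ℂ) • 1 := by
    rw [hVaz]
    ext i j; fin_cases i <;> fin_cases j <;> simp [pauliZ, diagonal_vec2] <;> ring
  have hpos : 0 < 2 * (1 + a) := by
    have : -1 ≤ a := by nlinarith [Complex.normSq_nonneg z]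
    have : -1 < a := lt_of_le_of_ne this ha.symm
    linarith
  set s := √(2 * (1 + a))
  have hss : ((s * s : ℝ) : ℂ) = 2 + ((2 * a : ℝ) : ℂ) := by
    rw [Real.mul_self_sqrt hpos.le]
    push_cast
    ring
  have hs0 : s ≠ 0 := (Real.sqrt_pos.mpr hpos).ne'
  refine ⟨((s⁻¹ : ℝ) : ℂ) • (V + pauliZ), ?_, ?_⟩
  · refine isReflection_ofReal_inv_smul (hV.isHermitian.add isReflection_pauliZ.isHermitian) ?_
      (by rw [hss, add_mul_self_of_anticomm hV.mul_self isReflection_pauliZ.mul_self hanti]) hs0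
    rw [trace_add, hV.trace_eq_zero, isReflection_pauliZ.trace_eq_zero, add_zero]
  · rw [smul_mul_assoc, smul_mul_assoc, mul_smul_comm, smul_smul,
      add_mul_mul_add_of_anticomm hV.mul_self isReflection_pauliZ.mul_self hanti, ← hss,
      smul_smul, ← Complex.ofReal_mul, ← Complex.ofReal_mul,
      show s⁻¹ * s⁻¹ * (s * s) = 1 by field_simp, Complex.ofReal_one, one_smul]

end IsReflection

lemma Matrix.IsHermitian.exists_isReflection_conj_diagonal {A : M₂} (hA : A.IsHermitian) :
    ∃ T, IsReflection T ∧ ∃ l m : ℝ, A = T * diagonal ![(l : ℂ), m] * T := by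
  set k : ℝ := ((A 0 0).re + (A 1 1).re) / 2
  have hX : (A - (k : ℂ) • 1).IsHermitian := hA.sub (isHermitian_one.smul (Complex.conj_ofReal k))
  have h0 : (A - (k : ℂ) • 1).trace = 0 := by
    rw [trace_sub, trace_smul, trace_one, trace_fin_two, ← hA.coe_re_apply_self 0,
      ← hA.coe_re_apply_self 1]
    simp [k]
  obtain ⟨r, W, hW, hXW⟩ := hX.exists_ofReal_smul_isReflection h0
  obtain ⟨T, hT, rfl⟩ := hW.exists_conj_pauliZ
  refine ⟨T, hT, k + r, k - r, ?_⟩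
  calc A = (k : ℂ) • 1 + (r : ℂ) • (T * pauliZ * T) := by rw [← hXW]; abel
    _ = T * ((k : ℂ) • 1 + (r : ℂ) • pauliZ) * T := by
      rw [mul_add, add_mul, mul_smul_comm, smul_mul_assoc, mul_one, hT.mul_self,
        mul_smul_comm, smul_mul_assoc]
    _ = T * diagonal ![((k + r : ℝ) : ℂ), ((k - r : ℝ) : ℂ)] * T := by
      congr 2
      ext i j
      fin_cases i <;> fin_cases j <;> simp [pauliZ, diagonal_vec2, sub_eq_add_neg]

structure IsJTPHom {n α β : Type*} [Fintype n] [Mul α] [AddCommMonoid α] [Star α] [Mul β]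
    (Φ : Matrix n n α → β) : Prop where
  map_triple : ∀ A B, A.IsHermitian → B.IsHermitian → Φ (A * B * A) = Φ A * Φ B * Φ A

namespace IsJTPHom

section General

variable {n α β : Type*} [Fintype n] [DecidableEq n] [Ring α] [StarRing α] [Monoid β]
  {Φ : Matrix n n α → β} {S : Matrix n n α}

lemma map_mul_self (hΦ : IsJTPHom Φ) (h1 : Φ 1 = 1) (hS : S.IsHermitian) :
    Φ (S * S) = Φ S * Φ S := by
  simpa [h1] using hΦ.map_triple S 1 hS isHermitian_one

lemma map_neg_mul_self (hΦ : IsJTPHom Φ) (h1 : Φ 1 = 1) (hS : S.IsHermitian) :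
    Φ (-(S * S)) = Φ (-1) * Φ (S * S) := by
  have hneg : (-1 : Matrix n n α).IsHermitian := isHermitian_one.neg
  have hsq : Φ (-1) * Φ (-1) = 1 := by
    simpa [h1] using (hΦ.map_triple (-1) 1 hneg isHermitian_one).symm
  have hfix : Φ (-1) * Φ S * Φ (-1) = Φ S := by
    simpa using (hΦ.map_triple (-1) S hneg hS).symm
  have hcomm : Φ (-1) * Φ S = Φ S * Φ (-1) := by
    calc Φ (-1) * Φ S = Φ (-1) * (Φ (-1) * Φ S * Φ (-1)) := by rw [hfix]
      _ = Φ S * Φ (-1) := by rw [← mul_assoc, ← mul_assoc, hsq, one_mul]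
  calc Φ (-(S * S)) = Φ (S * (-1) * S) := by simp
    _ = Φ (-1) * Φ (S * S) := by
      rw [hΦ.map_triple S (-1) hS hneg, ← hcomm, mul_assoc, hΦ.map_mul_self h1 hS]

end General

variable {Φ : M₂ → M₂} {ε : ℂ} (hΦ : IsJTPHom Φ) (h1 : Φ 1 = 1) (hZ : Φ pauliZ = ε • 1)
  (hε : ε * ε = 1)
include hΦ h1 hZ

lemma map_isReflection {V : M₂} (hV : IsReflection V) : Φ V = ε • 1 := by
  obtain ⟨T, hT, rfl⟩ := hV.exists_conj_pauliZ
  rw [hΦ.map_triple T pauliZ hT.isHermitian isReflection_pauliZ.isHermitian, hZ, mul_smul_comm,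
    mul_one, smul_mul_assoc, ← hΦ.map_mul_self h1 hT.isHermitian, hT.mul_self, h1]

include hε in
lemma map_isReflection_conj {T B : M₂} (hT : IsReflection T) (hB : B.IsHermitian) :
    Φ (T * B * T) = Φ B := by
  rw [hΦ.map_triple T B hT.isHermitian hB, hΦ.map_isReflection h1 hZ hT, smul_mul_assoc,
    one_mul, mul_smul_comm, mul_one, smul_smul, hε, one_smul]

lemma map_mul_isReflection_mul {S V : M₂} (hS : S.IsHermitian) (hV : IsReflection V) :
    Φ (S * V * S) = ε • Φ (S * S) := by
  rw [hΦ.map_triple S V hS hV.isHermitian, hΦ.map_isReflection h1 hZ hV, mul_smul_comm, mul_one,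
    smul_mul_assoc, hΦ.map_mul_self h1 hS]

lemma map_smul_pauliX (a b : ℝ) :
    Φ (((a : ℂ) * b) • pauliX) = ε • Φ (diagonal ![(a : ℂ) * a, (b : ℂ) * b]) := by
  rw [← diagonal_mul_pauliX_mul, ← diagonal_vec2_mul_diagonal_vec2,
    hΦ.map_mul_isReflection_mul h1 hZ (isHermitian_diagonal_ofReal a b) isReflection_pauliX]

include hε in
lemma map_diagonal_of_pos {l m : ℝ} (hl : 0 < l) (hm : 0 < m) :
    Φ (diagonal ![(l : ℂ), m]) = Φ (diagonal ![(l : ℂ) * m, 1]) := by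
  have e1 := hΦ.map_smul_pauliX h1 hZ (√l) (√m)
  have e2 := hΦ.map_smul_pauliX h1 hZ (√(l * m)) 1
  rw [Complex.ofReal_sqrt_mul_self hl.le, Complex.ofReal_sqrt_mul_self hm.le] at e1
  rw [Complex.ofReal_sqrt_mul_self (mul_pos hl hm).le, Real.sqrt_mul hl.le] at e2
  push_cast at e2
  simp only [mul_one] at e2
  exact smul_right_injective _ (left_ne_zero_of_mul_eq_one hε) (e1.symm.trans e2)

lemma map_diagonal_eq_smul_abs {l m : ℝ} (h : l * m < 0) :
    Φ (diagonal ![(l : ℂ), m]) = ε • Φ (diagonal ![((|l| : ℝ) : ℂ), (|m| : ℝ)]) := by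
  set S := diagonal ![(√|l| : ℂ), √|m|]
  have hSS : S * S = diagonal ![((|l| : ℝ) : ℂ), (|m| : ℝ)] := by
    rw [diagonal_vec2_mul_diagonal_vec2, Complex.ofReal_sqrt_mul_self (abs_nonneg l),
      Complex.ofReal_sqrt_mul_self (abs_nonneg m)]
  obtain ⟨V, hV, hSVS⟩ : ∃ V, IsReflection V ∧ S * V * S = diagonal ![(l : ℂ), m] := by
    rcases mul_neg_iff.mp h with ⟨hl, hm⟩ | ⟨hl, hm⟩
    · refine ⟨pauliZ, isReflection_pauliZ, ?_⟩
      rw [pauliZ, diagonal_vec2_mul_diagonal_vec2, diagonal_vec2_mul_diagonal_vec2, mul_one,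
        mul_neg_one, neg_mul, Complex.ofReal_sqrt_mul_self (abs_nonneg _),
        Complex.ofReal_sqrt_mul_self (abs_nonneg _), abs_of_pos hl, abs_of_neg hm,
        Complex.ofReal_neg, neg_neg]
    · refine ⟨-pauliZ, isReflection_pauliZ.neg, ?_⟩
      rw [pauliZ, neg_diagonal_vec2, diagonal_vec2_mul_diagonal_vec2,
        diagonal_vec2_mul_diagonal_vec2, neg_neg, mul_one, mul_neg_one, neg_mul,
        Complex.ofReal_sqrt_mul_self (abs_nonneg _), Complex.ofReal_sqrt_mul_self (abs_nonneg _),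
        abs_of_pos hm, abs_of_neg hl, Complex.ofReal_neg, neg_neg]
  rw [← hSVS, hΦ.map_mul_isReflection_mul h1 hZ (isHermitian_diagonal_ofReal _ _) hV, hSS]

include hε in
lemma map_diagonal_of_mul_neg {l m : ℝ} (h : l * m < 0) :
    Φ (diagonal ![(l : ℂ), m]) = Φ (diagonal ![(l : ℂ) * m, 1]) := by
  have hlm := hΦ.map_diagonal_eq_smul_abs h1 hZ (l := l * m) (m := 1) (by rwa [mul_one])
  rw [abs_mul, abs_one] at hlm
  push_cast at hlm
  rw [hlm, hΦ.map_diagonal_eq_smul_abs h1 hZ h, hΦ.map_diagonal_of_pos h1 hZ hε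
    (abs_pos.2 (left_ne_zero_of_mul h.ne)) (abs_pos.2 (right_ne_zero_of_mul h.ne))]

include hε in
lemma map_diagonal_of_neg {l m : ℝ} (hl : l < 0) (hm : m < 0) :
    Φ (diagonal ![(l : ℂ), m]) = Φ (-1) * Φ (diagonal ![(l : ℂ) * m, 1]) := by
  set S := diagonal ![(√(-l) : ℂ), √(-m)]
  have hSS : S * S = diagonal ![-(l : ℂ), -m] := by
    rw [diagonal_vec2_mul_diagonal_vec2, Complex.ofReal_sqrt_mul_self (neg_nonneg.2 hl.le),
      Complex.ofReal_sqrt_mul_self (neg_nonneg.2 hm.le), Complex.ofReal_neg, Complex.ofReal_neg]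
  have hA : diagonal ![(l : ℂ), m] = -(S * S) := by rw [hSS, neg_diagonal_vec2, neg_neg, neg_neg]
  have hpos := hΦ.map_diagonal_of_pos h1 hZ hε (neg_pos.2 hl) (neg_pos.2 hm)
  push_cast at hpos
  rw [hA, hΦ.map_neg_mul_self h1 (isHermitian_diagonal_ofReal _ _), hSS, hpos, neg_mul_neg]

end IsJTPHom

theorem jtp_det_reduction_general
    (Φ : Matrix (Fin 2) (Fin 2) ℂ → Matrix (Fin 2) (Fin 2) ℂ)
    (hjtp : ∀ A B, A.IsHermitian → B.IsHermitian → Φ (A * B * A) = Φ A * Φ B * Φ A)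
    (h1 : Φ 1 = 1)
    (hJ : Φ (Matrix.diagonal ![(1 : ℂ), -1]) = 1 ∨ Φ (Matrix.diagonal ![(1 : ℂ), -1]) = -1) :
    (∀ A : Matrix (Fin 2) (Fin 2) ℂ, A.IsHermitian → IsUnit A →
        (A.PosDef ∨ (¬ A.PosDef ∧ ¬ (-A).PosDef)) →
        Φ A = Φ (Matrix.diagonal ![A.det, 1])) ∧
    (∀ A : Matrix (Fin 2) (Fin 2) ℂ, A.IsHermitian → (-A).PosDef →
        Φ A = Φ (-1) * Φ (Matrix.diagonal ![A.det, 1])) := by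
  have hΦ : IsJTPHom Φ := ⟨hjtp⟩
  obtain ⟨ε, hε, hZ⟩ : ∃ ε : ℂ, ε * ε = 1 ∧ Φ pauliZ = ε • 1 := by
    rcases hJ with h | h
    · exact ⟨1, one_mul 1, by rw [one_smul]; exact h⟩
    · exact ⟨-1, by norm_num, by rw [neg_smul, one_smul]; exact h⟩
  constructor
  · rintro _ hA hunit hcases
    obtain ⟨T, hT, l, m, rfl⟩ := hA.exists_isReflection_conj_diagonal
    rw [hΦ.map_isReflection_conj h1 hZ hε hT (isHermitian_diagonal_ofReal l m),
      hT.det_conj_diagonal]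
    rw [hT.posDef_conj_diagonal_iff, hT.posDef_neg_conj_diagonal_iff] at hcases
    rcases hcases with ⟨hl, hm⟩ | ⟨hpos, hneg⟩
    · exact hΦ.map_diagonal_of_pos h1 hZ hε hl hm
    · have hlm : l * m ≠ 0 := by
        have h := (isUnit_iff_isUnit_det _).mp hunit
        rw [hT.det_conj_diagonal, isUnit_iff_ne_zero] at h
        exact_mod_cast h
      refine hΦ.map_diagonal_of_mul_neg h1 hZ hε (mul_neg_iff.2 ?_)
      rcases (left_ne_zero_of_mul hlm).lt_or_gt with hl | hl <;>
        rcases (right_ne_zero_of_mul hlm).lt_or_gt with hm | hm <;> tauto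
  · rintro _ hA hneg
    obtain ⟨T, hT, l, m, rfl⟩ := hA.exists_isReflection_conj_diagonal
    rw [hT.posDef_neg_conj_diagonal_iff] at hneg
    rw [hΦ.map_isReflection_conj h1 hZ hε hT (isHermitian_diagonal_ofReal l m),
      hT.det_conj_diagonal]
    exact hΦ.map_diagonal_of_neg h1 hZ hε hneg.1 hneg.2

theorem jtp_det_reduction
    (Φ : Matrix (Fin 2) (Fin 2) ℂ → Matrix (Fin 2) (Fin 2) ℂ)
    (hherm : ∀ A, A.IsHermitian → (Φ A).IsHermitian)
    (hjtp : ∀ A B, A.IsHermitian → B.IsHermitian → Φ (A * B * A) = Φ A * Φ B * Φ A)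
    (h0 : Φ 0 = 0) (h1 : Φ 1 = 1)
    (hJ : Φ (Matrix.diagonal ![(1 : ℂ), -1]) = 1 ∨ Φ (Matrix.diagonal ![(1 : ℂ), -1]) = -1) :
    (∀ A : Matrix (Fin 2) (Fin 2) ℂ, A.IsHermitian → IsUnit A →
        (A.PosDef ∨ (¬ A.PosDef ∧ ¬ (-A).PosDef)) →
        Φ A = Φ (Matrix.diagonal ![A.det, 1])) ∧
    (∀ A : Matrix (Fin 2) (Fin 2) ℂ, A.IsHermitian → (-A).PosDef →
        Φ A = Φ (-1) * Φ (Matrix.diagonal ![A.det, 1])) :=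
  jtp_det_reduction_general Φ hjtp h1 hJ
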